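/- If ≺ is a priority on the conflict graph of a finite set r all of whose extensions (priorities ≺' ⊇ ≺) are acyclic, then the set of g-repairs equals the set of l-repairs. -/

import Mathlib

/-- A relation is acyclic if no element is related to itself by the transitive closure. -/
def Acyclic {α : Type*} (prec : α → α → Prop) : Prop :=
  ∀ x, ¬ Relation.TransGen prec x x

/-- The global preference order on sets of tuples: `X ≪ Y`. -/
def ll {α : Type*} (prec : α → α → Prop) (X Y : Set α) : Prop :=
  ∀ x ∈ X \ Y, ∃ y ∈ Y \ X, prec x y

/-- Closed neighborhood of `x` in the conflict graph. -/
def nbhd {α : Type*} (conflict : α → α → Prop) (x : α) : Set α :=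
  {x} ∪ {y | conflict x y}

/-- The winnow operator: elements of `s` not dominated by any element of `s`. -/
def winnow {α : Type*} (prec : α → α → Prop) (s : Set α) : Set α :=
  {t ∈ s | ¬ ∃ t' ∈ s, prec t t'}

/-- A repair: a maximal subset of `r` containing no conflicting pair. -/
def IsRepair {α : Type*} (r : Set α) (conflict : α → α → Prop) (X : Set α) : Prop :=
  X ⊆ r ∧ (∀ a ∈ X, ∀ b ∈ X, ¬ conflict a b) ∧
    ∀ y ∈ r, y ∉ X → ∃ a ∈ X, conflict y a

/-- A locally preferred repair: obtainable by iteratively choosing an undominated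
tuple and removing it together with its conflict neighborhood. -/
def IsLRepair {α : Type*} (r : Set α) (conflict prec : α → α → Prop) (X : Set α) : Prop :=
  ∃ (n : ℕ) (x : Fin n → α), Function.Injective x ∧ X = Set.range x ∧
    (∀ i : Fin n, x i ∈ winnow prec (r \ {y | ∃ j, j < i ∧ y ∈ nbhd conflict (x j)})) ∧
    winnow prec (r \ {y | ∃ i, y ∈ nbhd conflict (x i)}) = ∅

/-- A globally preferred repair: a `≪`-maximal repair. -/
def IsGRepair {α : Type*} (r : Set α) (conflict prec : α → α → Prop) (X : Set α) : Prop :=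
  IsRepair r conflict X ∧ ∀ Y, IsRepair r conflict Y → ll prec X Y → Y = X

/-!
An l-repair `X` is a maximal independent set because `≺` is acyclic, so a nonempty leftover
would still contain an undominated tuple. If `X ≪ Y` for a repair `Y`, then by induction along
the order in which `X` was built every chosen tuple lies in `Y`: a chosen tuple outside `Y` would
be dominated by a tuple of `Y \ X` that was still available when it was chosen.

Conversely, let `X` be a g-repair and extend `≺` by orienting every conflict between a tuple
outside `X` and a tuple of `X` that `≺` leaves unoriented towards `X`. This extension is acyclic,
so the greedy procedure can always pick a tuple undominated for it among the remaining ones.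
Such a tuple lies in `X`: otherwise exchanging it for its neighbours in `X` yields a repair `Y`
with `X ≪ Y`. Hence running the procedure with these picks, which are undominated for `≺` as
well, produces exactly `X`.
-/

section Repairs
variable {α : Type*}

theorem Acyclic.winnow_nonempty {p : α → α → Prop} (hp : Acyclic p) {S : Set α}
    (hS : S.Finite) (hne : S.Nonempty) : (winnow p S).Nonempty := by
  let q : α → α → Prop := fun a b => Relation.TransGen p b a
  have : IsStrictOrder α q :=
    { irrefl := hp
      trans := fun _ _ _ hab hbc => hbc.trans hab }
  obtain ⟨⟨m, hmS⟩, -, hmin⟩ :=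
    (hS.wellFoundedOn (r := q)).has_min Set.univ ⟨⟨_, hne.some_mem⟩, trivial⟩
  exact ⟨m, hmS, fun ⟨t, htS, hmt⟩ => hmin ⟨t, htS⟩ trivial (.single hmt)⟩

theorem winnow_anti {p q : α → α → Prop} (hpq : ∀ a b, p a b → q a b) (S : Set α) :
    winnow q S ⊆ winnow p S :=
  fun _ ⟨htS, hmax⟩ => ⟨htS, fun ⟨t', ht'S, hp⟩ => hmax ⟨t', ht'S, hpq _ _ hp⟩⟩

theorem winnow_empty (p : α → α → Prop) : winnow p ∅ = ∅ :=
  Set.eq_empty_of_subset_empty fun _ h => h.1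

variable {r : Set α} {conflict : α → α → Prop}

theorem exists_isRepair_superset (hr : r.Finite) (hsymm : ∀ x y, conflict x y → conflict y x)
    (hirr : ∀ x, ¬ conflict x x) {C : Set α} (hCr : C ⊆ r)
    (hC : ∀ a ∈ C, ∀ b ∈ C, ¬ conflict a b) :
    ∃ Y, IsRepair r conflict Y ∧ C ⊆ Y := by
  let 𝒴 : Set (Set α) := {Y | Y ⊆ r ∧ ∀ a ∈ Y, ∀ b ∈ Y, ¬ conflict a b}
  have h𝒴 : 𝒴.Finite := hr.finite_subsets.subset fun _ hY => hY.1
  obtain ⟨Y, hCY, ⟨hYr, hY⟩, hYmax⟩ := h𝒴.exists_le_maximal (a := C) ⟨hCr, hC⟩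
  refine ⟨Y, ⟨hYr, hY, fun y hyr hyY => ?_⟩, hCY⟩
  by_contra! hfree
  have hins : insert y Y ∈ 𝒴 := by
    refine ⟨Set.insert_subset hyr hYr, ?_⟩
    rintro a (rfl | ha) b (rfl | hb)
    exacts [hirr _, hfree _ hb, fun h => hfree a ha (hsymm _ _ h), hY a ha b hb]
  exact hyY (hYmax hins (Set.subset_insert y Y) (Set.mem_insert y Y))

end Repairs

section LRepair
variable {α : Type*} {S X : Set α} {conflict prec : α → α → Prop}

theorem isLRepair_empty (h : winnow prec S = ∅) : IsLRepair S conflict prec ∅ :=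
  ⟨0, Fin.elim0, Function.injective_of_subsingleton _, (Set.range_eq_empty _).symm,
    fun i => i.elim0, by simpa using h⟩

theorem IsLRepair.insert {m : α} (hm : m ∈ winnow prec S)
    (hX : IsLRepair (S \ nbhd conflict m) conflict prec X) :
    IsLRepair S conflict prec (insert m X) := by
  obtain ⟨n, x, hinj, rfl, hwin, hend⟩ := hX
  refine ⟨n + 1, Fin.cons m x, ?_, (Fin.range_cons m x).symm, ?_, ?_⟩
  · refine Fin.cons_injective_iff.2 ⟨?_, hinj⟩
    rintro ⟨i, rfl⟩
    exact (hwin i).1.1.2 (Or.inl rfl)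
  · refine Fin.cases (by simpa using hm) fun i => ?_
    have hrest :
        S \ {y | ∃ j, j < i.succ ∧
          y ∈ nbhd conflict ((Fin.cons m x : Fin (n + 1) → α) j)} =
          (S \ nbhd conflict m) \ {y | ∃ j, j < i ∧ y ∈ nbhd conflict (x j)} := by
      ext y
      simp [Fin.exists_fin_succ, Fin.succ_lt_succ_iff, and_assoc]
    rw [Fin.cons_succ, hrest]
    exact hwin i
  · convert hend using 2
    ext y
    simp [Fin.exists_fin_succ, and_assoc]

end LRepair

section LToG
variable {α : Type*} {r X : Set α} {conflict prec : α → α → Prop}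

theorem IsRepair.eq_of_subset {Y : Set α} (hX : IsRepair r conflict X) (hYr : Y ⊆ r)
    (hY : ∀ a ∈ Y, ∀ b ∈ Y, ¬ conflict a b) (hXY : X ⊆ Y) : Y = X := by
  refine (Set.Subset.antisymm hXY ?_).symm
  intro y hyY
  by_contra hyX
  obtain ⟨a, haX, hya⟩ := hX.2.2 y (hYr hyY) hyX
  exact hY y hyY a (hXY haX) hya

theorem IsLRepair.isRepair (hr : r.Finite) (hsymm : ∀ x y, conflict x y → conflict y x)
    (hirr : ∀ x, ¬ conflict x x) (hprec : Acyclic prec) (hX : IsLRepair r conflict prec X) :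
    IsRepair r conflict X := by
  obtain ⟨n, x, -, rfl, hwin, hend⟩ := hX
  have hearlier : ∀ i j, j < i → ¬ conflict (x j) (x i) :=
    fun i j hji hc => (hwin i).1.2 ⟨j, hji, Or.inr hc⟩
  refine ⟨Set.range_subset_iff.2 fun i => (hwin i).1.1, ?_, fun y hyr hyX => ?_⟩
  · rintro _ ⟨i, rfl⟩ _ ⟨j, rfl⟩ hc
    rcases lt_trichotomy i j with hij | rfl | hji
    exacts [hearlier j i hij hc, hirr _ hc, hearlier i j hji (hsymm _ _ hc)]
  · by_contra! hfree
    have hleft : y ∈ r \ {y | ∃ i, y ∈ nbhd conflict (x i)} := by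
      refine ⟨hyr, fun ⟨i, hi⟩ => hi.elim (fun h => hyX ⟨i, h.symm⟩) fun h => ?_⟩
      exact hfree (x i) ⟨i, rfl⟩ (hsymm _ _ h)
    simpa [hend] using hprec.winnow_nonempty (hr.subset Set.sdiff_subset) ⟨y, hleft⟩

theorem IsLRepair.isGRepair (hr : r.Finite) (hsymm : ∀ x y, conflict x y → conflict y x)
    (hirr : ∀ x, ¬ conflict x x) (hprec : Acyclic prec) (hX : IsLRepair r conflict prec X) :
    IsGRepair r conflict prec X := by
  have hXrep := hX.isRepair hr hsymm hirr hprec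
  refine ⟨hXrep, fun Y hY hXY => hXrep.eq_of_subset hY.1 hY.2.1 ?_⟩
  obtain ⟨n, x, -, rfl, hwin, -⟩ := hX
  rintro _ ⟨i, rfl⟩
  induction i using WellFoundedLT.induction with
  | _ i ih =>
    by_contra hxiY
    obtain ⟨y, ⟨hyY, hyX⟩, hxy⟩ := hXY (x i) ⟨⟨i, rfl⟩, hxiY⟩
    refine (hwin i).2 ⟨y, ⟨hY.1 hyY, ?_⟩, hxy⟩
    rintro ⟨j, hji, rfl | hc⟩
    exacts [hyX ⟨j, rfl⟩, hY.2.1 _ (ih j hji) y hyY hc]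

end LToG

section GToL
variable {α : Type*} {r X : Set α} {conflict prec : α → α → Prop}

def Favoring (prec conflict : α → α → Prop) (X : Set α) (a b : α) : Prop :=
  prec a b ∨ (conflict a b ∧ b ∈ X ∧ a ∉ X ∧ ¬ prec b a)

theorem favoring_conflict (hsub : ∀ x y, prec x y → conflict x y) {a b : α}
    (h : Favoring prec conflict X a b) : conflict a b :=
  h.elim (hsub a b) And.left

theorem favoring_asymm (hasymm : ∀ x y, prec x y → ¬ prec y x) {a b : α}
    (h : Favoring prec conflict X a b) : ¬ Favoring prec conflict X b a := by
  rcases h with hab | ⟨-, hbX, haX, hba⟩ <;> rintro (hba' | ⟨-, haX', hbX', hab'⟩)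
  exacts [hasymm a b hab hba', hab' hab, hba hba', hbX' hbX]

theorem IsGRepair.mem_of_mem_winnow_favoring (hr : r.Finite)
    (hsymm : ∀ x y, conflict x y → conflict y x) (hirr : ∀ x, ¬ conflict x x)
    (hX : IsGRepair r conflict prec X) {S : Set α} (hSr : S ⊆ r)
    (hsep : ∀ a ∈ X, a ∉ S → ∀ s ∈ S, ¬ conflict a s) {m : α}
    (hm : m ∈ winnow (Favoring prec conflict X) S) : m ∈ X := by
  by_contra hmX
  have hC : ∀ a ∈ insert m (X \ nbhd conflict m), ∀ b ∈ insert m (X \ nbhd conflict m),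
      ¬ conflict a b := by
    rintro a (rfl | ha) b (rfl | hb)
    exacts [hirr _, fun h => hb.2 (Or.inr h), fun h => ha.2 (Or.inr (hsymm _ _ h)),
      hX.1.2.1 a ha.1 b hb.1]
  obtain ⟨Y, hY, hCY⟩ := exists_isRepair_superset hr hsymm hirr
    (Set.insert_subset (hSr hm.1) (Set.sdiff_subset.trans hX.1.1)) hC
  have hmY : m ∈ Y := hCY (Set.mem_insert m _)
  suffices hXY : ll prec X Y from hmX (hX.2 Y hY hXY ▸ hmY)
  rintro x ⟨hxX, hxY⟩
  refine ⟨m, ⟨hmY, hmX⟩, ?_⟩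
  have hmx : conflict m x := by
    by_contra hmx
    refine hxY (hCY (Set.mem_insert_of_mem m ⟨hxX, ?_⟩))
    rintro (rfl | h)
    exacts [hmX hxX, hmx h]
  have hxS : x ∈ S := by
    by_contra hxS
    exact hsep x hxX hxS m hm.1 (hsymm m x hmx)
  by_contra hxm
  exact hm.2 ⟨x, hxS, Or.inr ⟨hmx, hxX, hmX, hxm⟩⟩

theorem IsGRepair.isLRepair_inter (hr : r.Finite)
    (hsymm : ∀ x y, conflict x y → conflict y x) (hirr : ∀ x, ¬ conflict x x)
    (hX : IsGRepair r conflict prec X) (hacyc : Acyclic (Favoring prec conflict X))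
    (S : Set α) (hSr : S ⊆ r) (hsep : ∀ a ∈ X, a ∉ S → ∀ s ∈ S, ¬ conflict a s) :
    IsLRepair S conflict prec (X ∩ S) := by
  induction hn : S.ncard using Nat.strong_induction_on generalizing S with
  | _ n ih =>
    rcases S.eq_empty_or_nonempty with rfl | hne
    · simpa using isLRepair_empty (conflict := conflict) (winnow_empty prec)
    obtain ⟨m, hm⟩ := hacyc.winnow_nonempty (hr.subset hSr) hne
    have hmX := hX.mem_of_mem_winnow_favoring hr hsymm hirr hSr hsep hm
    have hXS : X ∩ S = insert m (X ∩ (S \ nbhd conflict m)) := by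
      ext a
      refine ⟨fun ⟨haX, haS⟩ => ?_, ?_⟩
      · by_cases ham : a = m
        · exact Or.inl ham
        · exact Or.inr ⟨haX, haS, fun h => h.elim ham (hX.1.2.1 m hmX a haX)⟩
      · rintro (rfl | ⟨haX, haS, -⟩)
        exacts [⟨hmX, hm.1⟩, ⟨haX, haS⟩]
    have hrest : IsLRepair (S \ nbhd conflict m) conflict prec (X ∩ (S \ nbhd conflict m)) := by
      refine ih _ ?_ _ (Set.sdiff_subset.trans hSr) ?_ rfl
      · exact hn ▸ Set.ncard_lt_ncard
          ⟨Set.sdiff_subset, fun h => (h hm.1).2 (Or.inl rfl)⟩ (hr.subset hSr)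
      · intro a haX haS' s hs
        by_cases haS : a ∈ S
        · rcases not_and_not_right.1 haS' haS with rfl | hma
          exacts [fun h => hs.2 (Or.inr h), absurd hma (hX.1.2.1 m hmX a haX)]
        · exact hsep a haX haS s hs.1
    rw [hXS]
    exact hrest.insert (winnow_anti (fun _ _ => Or.inl) S hm)

end GToL

/-- if every extension of the priority ≺ is acyclic, then the
g-repairs coincide with the l-repairs. -/
theorem grepair_eq_lrepair_of_acyclic_extensions {α : Type*} (r : Set α)
    (hr : r.Finite) (conflict prec : α → α → Prop)
    (hsymm : ∀ x y, conflict x y → conflict y x)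
    (hirr : ∀ x, ¬ conflict x x)
    (hsub : ∀ x y, prec x y → conflict x y)
    (hasymm : ∀ x y, prec x y → ¬ prec y x)
    (hext_acyc : ∀ prec' : α → α → Prop,
      (∀ x y, prec' x y → conflict x y) →
      (∀ x y, prec' x y → ¬ prec' y x) →
      (∀ x y, prec x y → prec' x y) →
      Acyclic prec') :
    ∀ X : Set α, IsGRepair r conflict prec X ↔ IsLRepair r conflict prec X := by
  intro X
  refine ⟨fun hX => ?_, fun hX => ?_⟩
  · have hacyc : Acyclic (Favoring prec conflict X) :=
      hext_acyc _ (fun _ _ => favoring_conflict hsub) (fun _ _ => favoring_asymm hasymm)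
        fun _ _ => Or.inl
    have hL := hX.isLRepair_inter hr hsymm hirr hacyc r subset_rfl
      fun a haX har => absurd (hX.1.1 haX) har
    rwa [Set.inter_eq_left.2 hX.1.1] at hL
  · exact hX.isGRepair hr hsymm hirr (hext_acyc prec hsub hasymm fun _ _ => id)
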